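/- arXiv:1011.4662 — 2 statements merged into one kernel-verified Lean document; each statement's English description precedes it below -/
import Mathlib

section
/- Let I ⊂ k[x_1,…,x_n] be a Borel fixed monomial ideal, not a prime ideal, with all minimal generators of degree ≤ d. Let l = ν(I) be the maximal index of a variable dividing a minimal generator of I, let m be the lexicographically largest element of { u ∈ G(I) : ν(u) = l } (assume m ≠ x_l), and set m_1 = m / x_l. Then the ideal I + (m_1) is also Borel fixed. -/
open MvPolynomial CategoryTheory

namespace Pol


/-- Total degree of an exponent vector. -/
def degE {σ : Type} (a : σ →₀ ℕ) : ℕ := a.sum fun _ e => e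

/-- `I` is a monomial ideal. -/
def IsMonomialIdeal {σ k : Type} [CommRing k] (I : Ideal (MvPolynomial σ k)) : Prop :=
  ∃ A : Set (σ →₀ ℕ), I = Ideal.span ((fun a => (monomial a 1 : MvPolynomial σ k)) '' A)

/-- `I` is a squarefree monomial ideal. -/
def IsSquarefreeMonomialIdeal {σ k : Type} [CommRing k] (I : Ideal (MvPolynomial σ k)) : Prop :=
  ∃ A : Set (σ →₀ ℕ), (∀ a ∈ A, ∀ i, a i ≤ 1) ∧
    I = Ideal.span ((fun a => (monomial a 1 : MvPolynomial σ k)) '' A)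

/-- Borel fixed (strongly stable) exchange property: `m ∈ I`, `x_i ∣ m`, `j < i`
implies `(x_j/x_i)·m ∈ I`. -/
def IsBorelFixed {n : ℕ} {k : Type} [CommRing k] (I : Ideal (MvPolynomial (Fin n) k)) : Prop :=
  ∀ a : Fin n →₀ ℕ, (monomial a 1 : MvPolynomial (Fin n) k) ∈ I →
    ∀ i j : Fin n, j < i → a i ≠ 0 →
      (monomial (a + Finsupp.single j 1 - Finsupp.single i 1) 1 : MvPolynomial (Fin n) k) ∈ I

/-- `x^a` is a minimal generator of the monomial ideal `I`. -/
def IsMinGen {σ k : Type} [CommRing k] (I : Ideal (MvPolynomial σ k)) (a : σ →₀ ℕ) : Prop :=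
  (monomial a 1 : MvPolynomial σ k) ∈ I ∧
    ∀ i : σ, a i ≠ 0 → (monomial (a - Finsupp.single i 1) 1 : MvPolynomial σ k) ∉ I

/-- partial sum `b_i = a_1 + ⋯ + a_i` (cutoff `i : ℕ`, counting the first `i` variables). -/
def psum {n : ℕ} (a : Fin n →₀ ℕ) (i : ℕ) : ℕ :=
  ∑ j ∈ Finset.univ.filter (fun j : Fin n => (j : ℕ) < i), a j

/-- The exponent vector of `B(x^a)`: the variables `x_{i,j}` with
`b_{i-1}+1 ≤ j ≤ b_i` (in 0-indexed form `b_{i-1} ≤ j < b_i`). -/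
noncomputable def boxExp {n : ℕ} (d : ℕ) (a : Fin n →₀ ℕ) : (Fin n × Fin d) →₀ ℕ :=
  ∑ p ∈ Finset.univ.filter
      (fun p : Fin n × Fin d => psum a (p.1 : ℕ) ≤ (p.2 : ℕ) ∧ (p.2 : ℕ) < psum a ((p.1 : ℕ) + 1)),
    Finsupp.single p 1

/-- The exponent vector of the standard polarization `pol(x^a) = ∏_i x_{i,1} ⋯ x_{i,a_i}`. -/
noncomputable def polExp {n : ℕ} (d : ℕ) (a : Fin n →₀ ℕ) : (Fin n × Fin d) →₀ ℕ :=
  ∑ p ∈ Finset.univ.filter (fun p : Fin n × Fin d => (p.2 : ℕ) < a p.1), Finsupp.single p 1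

/-- `B(I)`, generated by `B(m)` for minimal generators `m` of `I`. -/
noncomputable def boxIdeal {n : ℕ} {k : Type} [CommRing k] (d : ℕ) (I : Ideal (MvPolynomial (Fin n) k)) :
    Ideal (MvPolynomial (Fin n × Fin d) k) :=
  Ideal.span {q | ∃ a : Fin n →₀ ℕ, IsMinGen I a ∧ q = monomial (boxExp d a) 1}

/-- The sequence `Θ = (x_{i,1} - x_{i,j})_{1 ≤ i ≤ n, 2 ≤ j ≤ d}` (0-indexed: `j ≥ 1`). -/
noncomputable def thetaList (n d : ℕ) (k : Type) [CommRing k] : List (MvPolynomial (Fin n × Fin d) k) :=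
  (List.finRange n).flatMap fun i =>
    ((List.finRange d).drop 1).map fun (j : Fin d) =>
      X (i, (⟨0, Nat.lt_of_le_of_lt (Nat.zero_le j.val) j.isLt⟩ : Fin d)) - X (i, j)

/-- The depolarization map `φ : Ŝ → S`, `x_{i,j} ↦ x_i`. -/
noncomputable def phi (n d : ℕ) (k : Type) [CommRing k] :
    MvPolynomial (Fin n × Fin d) k →ₐ[k] MvPolynomial (Fin n) k :=
  rename Prod.fst

/-- `x^a` is strictly larger than `x^c` in the (non-degree) lexicographic order with
`x_1 > x_2 > ⋯ > x_n`. -/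
def lexLT {n : ℕ} (c a : Fin n →₀ ℕ) : Prop :=
  ∃ i : Fin n, c i < a i ∧ ∀ j : Fin n, j < i → c j = a j

/-! The only new Borel moves to check are those of `m₁ = m / x_l`. For `j < i` with
`x_i ∣ m₁`, the monomial `v = (x_j / x_i)·m` lies in `I`, is divisible by `x_l`, involves no
variable after `x_l`, and is lexicographically larger than `m`. By the maximality of `m` it is not
a minimal generator, and in a Borel fixed ideal this forces `v / x_l = (x_j / x_i)·m₁ ∈ I`. -/

section MonomialIdeal

variable {σ k : Type} [CommRing k]

theorem monomial_mem_span_monomial_image_iff [Nontrivial k] (S : Set (σ →₀ ℕ))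
    (b : σ →₀ ℕ) :
    (monomial b 1 : MvPolynomial σ k) ∈
      Ideal.span ((fun s => (monomial s 1 : MvPolynomial σ k)) '' S) ↔ ∃ s ∈ S, s ≤ b := by
  classical
  simp [mem_ideal_span_monomial_image, support_monomial]

theorem IsMonomialIdeal.monomial_mem_of_le [Nontrivial k] {I : Ideal (MvPolynomial σ k)}
    (hmon : IsMonomialIdeal I) {c b : σ →₀ ℕ}
    (hc : (monomial c 1 : MvPolynomial σ k) ∈ I) (hcb : c ≤ b) :
    (monomial b 1 : MvPolynomial σ k) ∈ I := by
  obtain ⟨S, rfl⟩ := hmon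
  obtain ⟨s, hsS, hsc⟩ := (monomial_mem_span_monomial_image_iff S c).1 hc
  exact (monomial_mem_span_monomial_image_iff S b).2 ⟨s, hsS, hsc.trans hcb⟩

theorem span_monomial_image_sup_span_monomial (S : Set (σ →₀ ℕ)) (c : σ →₀ ℕ) :
    Ideal.span ((fun s => (monomial s 1 : MvPolynomial σ k)) '' S) ⊔
        Ideal.span {(monomial c 1 : MvPolynomial σ k)} =
      Ideal.span ((fun s => (monomial s 1 : MvPolynomial σ k)) '' (S ∪ {c})) := by
  rw [Set.image_union, Set.image_singleton, Ideal.span_union]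

theorem IsMonomialIdeal.sup_span_monomial {I : Ideal (MvPolynomial σ k)}
    (hmon : IsMonomialIdeal I) (c : σ →₀ ℕ) :
    IsMonomialIdeal (I ⊔ Ideal.span {(monomial c 1 : MvPolynomial σ k)}) := by
  obtain ⟨S, rfl⟩ := hmon
  exact ⟨S ∪ {c}, span_monomial_image_sup_span_monomial S c⟩

theorem IsMonomialIdeal.monomial_mem_sup_span_monomial_iff [Nontrivial k]
    {I : Ideal (MvPolynomial σ k)} (hmon : IsMonomialIdeal I) (b c : σ →₀ ℕ) :
    (monomial b 1 : MvPolynomial σ k) ∈ I ⊔ Ideal.span {(monomial c 1 : MvPolynomial σ k)} ↔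
      (monomial b 1 : MvPolynomial σ k) ∈ I ∨ c ≤ b := by
  obtain ⟨S, rfl⟩ := hmon
  rw [span_monomial_image_sup_span_monomial, monomial_mem_span_monomial_image_iff,
    monomial_mem_span_monomial_image_iff]
  simp [or_and_right, exists_or, or_comm]

end MonomialIdeal

theorem exists_isMinGen_le {σ k : Type} [CommRing k] (I : Ideal (MvPolynomial σ k))
    {b : σ →₀ ℕ} (hb : (monomial b 1 : MvPolynomial σ k) ∈ I) : ∃ c ≤ b, IsMinGen I c := by
  obtain ⟨c, hcb, hc⟩ := exists_minimal_le_of_wellFoundedLT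
    (fun c => (monomial c 1 : MvPolynomial σ k) ∈ I) b hb
  refine ⟨c, hcb, hc.prop, fun i hi hmem => ?_⟩
  have := hc.le_of_le hmem tsub_le_self i
  simp only [Finsupp.tsub_apply, Finsupp.single_eq_same] at this
  omega

theorem add_single_le_of_lt {σ : Type} {c b : σ →₀ ℕ} (h : c ≤ b) {i : σ} (hi : c i < b i) :
    c + Finsupp.single i 1 ≤ b := by
  classical
  intro t
  by_cases ht : i = t
  · subst ht; simpa using hi
  · simpa [Finsupp.single_eq_of_ne' ht] using h t

theorem sub_single_add_single_sub_single {σ : Type} (a : σ →₀ ℕ) {i j l : σ} (hij : i ≠ j)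
    (hjl : j ≠ l) :
    a - Finsupp.single l 1 + Finsupp.single j 1 - Finsupp.single i 1 =
      a + Finsupp.single j 1 - Finsupp.single i 1 - Finsupp.single l 1 := by
  classical
  ext s
  simp only [Finsupp.tsub_apply, Finsupp.add_apply, Finsupp.single_apply]
  split_ifs <;> subst_vars <;> first | omega | simp_all

theorem not_lexLT_add_single_sub_single {n : ℕ} (a : Fin n →₀ ℕ) {i j : Fin n} (hji : j < i) :
    ¬ lexLT (a + Finsupp.single j 1 - Finsupp.single i 1) a := by
  rintro ⟨t, hlt, heq⟩
  have hti : t = i := by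
    by_contra hti
    simp only [Finsupp.tsub_apply, Finsupp.add_apply, Finsupp.single_eq_of_ne hti] at hlt
    omega
  have := heq j (hti ▸ hji)
  simp [Finsupp.single_eq_of_ne' hji.ne'] at this

section BorelFixed

variable {n : ℕ} {k : Type} [CommRing k] [Nontrivial k] {I : Ideal (MvPolynomial (Fin n) k)}

theorem IsBorelFixed.sup_span_monomial (hmon : IsMonomialIdeal I) (hB : IsBorelFixed I)
    (c : Fin n →₀ ℕ)
    (hc : ∀ i j : Fin n, j < i → c i ≠ 0 →
      (monomial (c + Finsupp.single j 1 - Finsupp.single i 1) 1 : MvPolynomial (Fin n) k) ∈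
        I ⊔ Ideal.span {(monomial c 1 : MvPolynomial (Fin n) k)}) :
    IsBorelFixed (I ⊔ Ideal.span {(monomial c 1 : MvPolynomial (Fin n) k)}) := by
  intro b hb i j hji hbi
  rcases (hmon.monomial_mem_sup_span_monomial_iff b c).1 hb with hbI | hcb
  · exact Ideal.mem_sup_left (hB b hbI i j hji hbi)
  rcases (hcb i).lt_or_eq with hlt | heq
  · refine (hmon.monomial_mem_sup_span_monomial_iff _ c).2 (Or.inr ?_)
    exact le_tsub_of_add_le_right ((add_single_le_of_lt hcb hlt).trans le_self_add)
  · exact (hmon.sup_span_monomial c).monomial_mem_of_le (hc i j hji (heq.trans_ne hbi))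
      (tsub_le_tsub_right (add_le_add hcb le_rfl) _)

/-- A minimal generator strictly below `x^v` either lacks a factor `x_l`, or lacks some `x_s`
with `s < l`, and then its Borel move `x_s / x_l` divides `x^v / x_l`. -/
theorem IsBorelFixed.isMinGen_or_sub_single_mem (hmon : IsMonomialIdeal I)
    (hB : IsBorelFixed I) {v : Fin n →₀ ℕ} {l : Fin n}
    (hv : (monomial v 1 : MvPolynomial (Fin n) k) ∈ I) (hvl : v l ≠ 0)
    (hvsupp : ∀ s ∈ v.support, s ≤ l) :
    IsMinGen I v ∨ (monomial (v - Finsupp.single l 1) 1 : MvPolynomial (Fin n) k) ∈ I := by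
  obtain ⟨c, hcv, hc⟩ := exists_isMinGen_le I hv
  rcases (hcv l).lt_or_eq with hl | hl
  · exact Or.inr (hmon.monomial_mem_of_le hc.1
      (le_tsub_of_add_le_right (add_single_le_of_lt hcv hl)))
  rcases hcv.lt_or_eq with hlt | rfl
  · obtain ⟨s, hs⟩ := (Finsupp.lt_def.1 hlt).2
    have hsl : s < l :=
      (hvsupp s (Finsupp.mem_support_iff.2 (by omega))).lt_of_ne (by rintro rfl; omega)
    exact Or.inr (hmon.monomial_mem_of_le (hB c hc.1 l s hsl (hl.trans_ne hvl))
      (tsub_le_tsub_right (add_single_le_of_lt hcv hs) _))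
  · exact Or.inl hc

end BorelFixed

theorem borelFixed_add_quotient_generator_general (n : ℕ) (k : Type) [Field k]
    (I : Ideal (MvPolynomial (Fin n) k)) (hmon : IsMonomialIdeal I) (hB : IsBorelFixed I)
    (a : Fin n →₀ ℕ) (il : Fin n) (ha : IsMinGen I a) (hail : a il ≠ 0)
    (hasupp : ∀ j ∈ a.support, j ≤ il)
    (hmax : ∀ c : Fin n →₀ ℕ, IsMinGen I c → c il ≠ 0 → c ≠ a → lexLT c a) :
    IsMonomialIdeal (I ⊔ Ideal.span {(monomial (a - Finsupp.single il 1) 1 :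
        MvPolynomial (Fin n) k)})
      ∧ IsBorelFixed (I ⊔ Ideal.span {(monomial (a - Finsupp.single il 1) 1 :
        MvPolynomial (Fin n) k)}) := by
  refine ⟨hmon.sup_span_monomial _, hB.sup_span_monomial hmon _ fun i j hji hci => ?_⟩
  have hai : a i ≠ 0 := fun h => hci (by simp [h])
  have hjl : j < il := hji.trans_le (hasupp i (by simpa using hai))
  set v := a + Finsupp.single j 1 - Finsupp.single i 1 with hv_def
  have hvl : v il ≠ 0 := by
    simp only [hv_def, Finsupp.tsub_apply, Finsupp.add_apply, Finsupp.single_eq_of_ne' hjl.ne]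
    rcases eq_or_ne i il with rfl | hil
    · simpa using hci
    · simpa [Finsupp.single_eq_of_ne' hil] using hail
  have hvsupp : ∀ s ∈ v.support, s ≤ il := by
    intro s hs
    rcases eq_or_ne j s with rfl | hjs
    · exact hjl.le
    · have hvs := Finsupp.mem_support_iff.1 hs
      simp only [hv_def, Finsupp.tsub_apply, Finsupp.add_apply, Finsupp.single_eq_of_ne' hjs]
        at hvs
      exact hasupp s (Finsupp.mem_support_iff.2 (by omega))
  have hva : v ≠ a := by
    intro h
    have := DFunLike.congr_fun h j
    simp [hv_def, Finsupp.single_eq_of_ne' hji.ne'] at this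
  rw [sub_single_add_single_sub_single a hji.ne' hjl.ne]
  refine Ideal.mem_sup_left ((hB.isMinGen_or_sub_single_mem hmon (hB a ha.1 i j hji hai) hvl
    hvsupp).resolve_left fun hmin => ?_)
  exact not_lexLT_add_single_sub_single a hji (hmax v hmin hvl hva)

/-- Claim 1: with `l = ν(I)`, `m` the lex-largest minimal generator with
`ν(m) = l` and `m ≠ x_l`, the ideal `I + (m/x_l)` is again a Borel fixed monomial ideal. -/
theorem borelFixed_add_quotient_generator (n d : ℕ) (k : Type) [Field k]
    (I : Ideal (MvPolynomial (Fin n) k)) (hmon : IsMonomialIdeal I) (hB : IsBorelFixed I)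
    (hnp : ¬ I.IsPrime) (hd : ∀ a : Fin n →₀ ℕ, IsMinGen I a → degE a ≤ d)
    (a : Fin n →₀ ℕ) (il : Fin n) (ha : IsMinGen I a) (hail : a il ≠ 0)
    (hasupp : ∀ j ∈ a.support, j ≤ il)
    (hnuI : ∀ c : Fin n →₀ ℕ, IsMinGen I c → ∀ j ∈ c.support, j ≤ il)
    (hmax : ∀ c : Fin n →₀ ℕ, IsMinGen I c → c il ≠ 0 → c ≠ a → lexLT c a)
    (hne : a ≠ Finsupp.single il 1) :
    IsMonomialIdeal (I ⊔ Ideal.span {(monomial (a - Finsupp.single il 1) 1 :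
        MvPolynomial (Fin n) k)})
      ∧ IsBorelFixed (I ⊔ Ideal.span {(monomial (a - Finsupp.single il 1) 1 :
        MvPolynomial (Fin n) k)}) :=
  borelFixed_add_quotient_generator_general n k I hmon hB a il ha hail hasupp hmax

end Pol
end

section
/- Let I ⊂ k[x_1,…,x_n] be Borel fixed with all generators of degree ≤ d, l = ν(I), m the lexicographically largest minimal generator with ν(m) = l, m ≠ x_l, and m_1 = m/x_l = ∏_{i=1}^l x_i^{a_i} with partial sums b_i = a_1 + ⋯ + a_i. Set n̂ = B(m_1) ∈ Ŝ and J = B(I). Then the colon ideal J : n̂ equals the prime ideal ( x_{i, b_i + 1} : 1 ≤ i ≤ l ). -/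
/-!
Write `x^a = x^u · x_l` and `b_i` for the partial sums of `u`. As `B(I)` and `B(x^u)` are
monomial, the colon is spanned by the variables `x_{i,b_i+1}`, `i ≤ l`, none of which divides
`B(x^u)`, once every `B(c)`, `c` a minimal generator, contains one of them and every
`x_{i,b_i+1} B(x^u)` is divisible by some `B(c)`.

Both rest on the fact that a Borel fixed ideal contains every monomial whose partial degrees
dominate those of one of its elements. As `x^u ∉ I`, the partial sums of `c` overtake those of
`u` somewhere, and where they first do, `B(c)` contains `x_{i,b_i+1}`. Conversely, let `x_ρ` be
the first variable of `x^u` after `x_i`. Moving `x_ρ` to `x_i` in `x^a` gives a monomial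
lexicographically larger than `x^a`, hence not a minimal generator, and its proper minimal
divisor in `I` is dominated by `x^u x_i / x_ρ`, which thus lies in `I` (without such `ρ`,
`x^u x_i = x^a x_i / x_l` lies in `I` directly). `B(x^u x_i / x_ρ)` divides
`x_{i,b_i+1} B(x^u)`, and so does the `B` of the minimal generator of `I` that is an initial
segment of `x^u x_i / x_ρ`.
-/
open MvPolynomial CategoryTheory

namespace Pol


section PartialSums

open Finset

variable {n : ℕ}

lemma psum_zero (a : Fin n →₀ ℕ) : psum a 0 = 0 := by
  simp [psum]

lemma psum_mono (a : Fin n →₀ ℕ) {s t : ℕ} (h : s ≤ t) : psum a s ≤ psum a t :=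
  sum_le_sum_of_subset fun j hj => by
    simp only [mem_filter, mem_univ, true_and] at hj ⊢
    omega

lemma psum_le_psum {a b : Fin n →₀ ℕ} (h : a ≤ b) (s : ℕ) : psum a s ≤ psum b s :=
  sum_le_sum fun j _ => h j

lemma psum_succ (a : Fin n →₀ ℕ) (i : Fin n) : psum a (i + 1) = psum a i + a i := by
  have : univ.filter (fun j : Fin n => (j : ℕ) < i + 1)
      = insert i (univ.filter fun j : Fin n => (j : ℕ) < i) := by
    ext j
    simp only [mem_filter, mem_univ, true_and, mem_insert, Fin.ext_iff]
    omega
  rw [psum, this, sum_insert (by simp), add_comm, psum]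

lemma psum_add (a b : Fin n →₀ ℕ) (s : ℕ) : psum (a + b) s = psum a s + psum b s :=
  sum_add_distrib

lemma psum_single (j : Fin n) (m s : ℕ) :
    psum (Finsupp.single j m) s = if (j : ℕ) < s then m else 0 := by
  classical
  simp [psum, Finsupp.single_apply]

lemma psum_tsub_single {a : Fin n →₀ ℕ} {j : Fin n} (h : a j ≠ 0) (s : ℕ) :
    psum (a - Finsupp.single j 1) s + (if (j : ℕ) < s then 1 else 0) = psum a s := by
  rw [← psum_single, ← psum_add, tsub_add_cancel_of_le (Finsupp.single_le_iff.2 (by omega))]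

lemma psum_congr {a b : Fin n →₀ ℕ} {s : ℕ} (h : ∀ j : Fin n, (j : ℕ) < s → a j = b j) :
    psum a s = psum b s :=
  sum_congr rfl fun j hj => h j (by simpa using hj)

lemma psum_eq_of_forall_eq_zero {a : Fin n →₀ ℕ} {s t : ℕ} (hst : s ≤ t)
    (h : ∀ j : Fin n, s ≤ j → (j : ℕ) < t → a j = 0) : psum a t = psum a s := by
  refine (sum_subset (fun j hj => ?_) fun j hj hj' => ?_).symm
  · simp only [mem_filter, mem_univ, true_and] at hj ⊢
    omega
  · simp only [mem_filter, mem_univ, true_and, not_lt] at hj hj'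
    exact h j hj' hj

lemma degE_eq_psum (a : Fin n →₀ ℕ) : degE a = psum a n := by
  rw [degE, Finsupp.sum, psum]
  exact sum_subset (fun j _ => by simp) fun j _ hj => Finsupp.notMem_support_iff.mp hj

lemma psum_eq_degE {a : Fin n →₀ ℕ} {s : ℕ} (h : ∀ j : Fin n, s ≤ j → a j = 0) :
    psum a s = degE a := by
  rw [degE_eq_psum]
  rcases le_total s n with hs | hs
  · exact (psum_eq_of_forall_eq_zero hs fun j hj _ => h j hj).symm
  · exact psum_eq_of_forall_eq_zero hs fun j _ hj => absurd j.isLt (by omega)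

lemma psum_of_le (a : Fin n →₀ ℕ) {s : ℕ} (hs : n ≤ s) : psum a s = degE a :=
  psum_eq_degE fun j hj => absurd j.isLt (by omega)

lemma psum_le_degE (a : Fin n →₀ ℕ) (s : ℕ) : psum a s ≤ degE a := by
  rcases le_total s n with hs | hs
  · exact degE_eq_psum a ▸ psum_mono a hs
  · exact (psum_of_le a hs).le

lemma degE_add_single (a : Fin n →₀ ℕ) (j : Fin n) :
    degE (a + Finsupp.single j 1) = degE a + 1 := by
  rw [degE_eq_psum, degE_eq_psum, psum_add, psum_single, if_pos j.isLt]

lemma exists_psum_le_psum_succ_lt_psum_succ {c u : Fin n →₀ ℕ} (h : ∃ s, psum u s < psum c s) :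
    ∃ i : Fin n, psum c i ≤ psum u (i + 1) ∧ psum u (i + 1) < psum c (i + 1) := by
  classical
  have hfind := Nat.find_spec h
  have hpos : Nat.find h ≠ 0 := fun h0 => by simp [h0, psum_zero] at hfind
  have hle : Nat.find h ≤ n := by
    by_contra hgt
    refine Nat.find_min h (not_le.1 hgt) ?_
    rwa [psum_of_le u le_rfl, psum_of_le c le_rfl, ← psum_of_le u (not_le.1 hgt).le,
      ← psum_of_le c (not_le.1 hgt).le]
  have hprev := Nat.find_min h (show Nat.find h - 1 < Nat.find h by omega)
  have hmono := psum_mono u (show Nat.find h - 1 ≤ Nat.find h by omega)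
  refine ⟨⟨Nat.find h - 1, by omega⟩, ?_, ?_⟩ <;>
    simp only [Nat.sub_add_cancel (Nat.one_le_iff_ne_zero.2 hpos)] <;> omega

lemma degE_lt_degE {a b : Fin n →₀ ℕ} (h : a < b) : degE a < degE b := by
  obtain ⟨hle, j, hj⟩ := Finsupp.lt_def.1 h
  rw [degE_eq_psum, degE_eq_psum]
  exact sum_lt_sum (fun j _ => hle j) ⟨j, by simp, hj⟩

lemma psum_le_of_lt_add_single {g V : Fin n →₀ ℕ} {l : Fin n} (hg : g < V + Finsupp.single l 1)
    (hV : ∀ j, l < j → V j = 0) (s : ℕ) : psum g s ≤ psum V s := by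
  by_cases hs : (l : ℕ) < s
  · have hVs : psum V s = degE V := psum_eq_degE fun j hj => hV j (Fin.lt_def.2 (by omega))
    have hdeg := degE_lt_degE hg
    rw [degE_add_single] at hdeg
    have := psum_le_degE g s
    omega
  · have := psum_le_psum hg.le s
    rwa [psum_add, psum_single, if_neg hs, add_zero] at this

end PartialSums

section BorelFixed

open Finset

variable {n : ℕ} {k : Type} [CommRing k]

lemma psum_add_single_tsub_single {c : Fin n →₀ ℕ} (j : Fin n) {t : Fin n} (ht : c t ≠ 0)
    (s : ℕ) :
    psum (c + Finsupp.single j 1 - Finsupp.single t 1) s + (if (t : ℕ) < s then 1 else 0)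
      = psum c s + (if (j : ℕ) < s then 1 else 0) := by
  have h : (c + Finsupp.single j 1 : Fin n →₀ ℕ) t ≠ 0 := by
    rw [Finsupp.add_apply]
    omega
  rw [psum_tsub_single h, psum_add, psum_single]

lemma sum_psum_le_sum_psum {a b : Fin n →₀ ℕ} (h : ∀ s, psum a s ≤ psum b s) :
    ∑ s ∈ range (n + 1), psum a s ≤ ∑ s ∈ range (n + 1), psum b s :=
  sum_le_sum fun s _ => h s

lemma sum_psum_lt_sum_psum {a b : Fin n →₀ ℕ} (h : ∀ s, psum a s ≤ psum b s) {s : ℕ}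
    (hs : s ≤ n) (hlt : psum a s < psum b s) :
    ∑ s ∈ range (n + 1), psum a s < ∑ s ∈ range (n + 1), psum b s :=
  sum_lt_sum (fun s _ => h s) ⟨s, mem_range.2 (by omega), hlt⟩

lemma exists_forall_psum_le_psum_tsub_single {c u : Fin n →₀ ℕ}
    (hcu : ∀ s, psum c s ≤ psum u s) (hdeg : degE c < degE u) :
    ∃ q, u q ≠ 0 ∧ ∀ s, psum c s ≤ psum (u - Finsupp.single q 1) s := by
  have hu : u.support.Nonempty := by
    rw [Finsupp.support_nonempty_iff]
    rintro rfl
    simp [degE] at hdeg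
  set q := u.support.max' hu
  have hq : u q ≠ 0 := Finsupp.mem_support_iff.1 (max'_mem _ _)
  refine ⟨q, hq, fun s => ?_⟩
  have h := psum_tsub_single hq s
  split_ifs at h with hs
  · have hus : psum u s = degE u := psum_eq_degE fun j hj => by
      by_contra hj'
      have := Fin.le_def.1 (le_max' _ j (Finsupp.mem_support_iff.2 hj'))
      omega
    have := psum_le_degE c s
    omega
  · have := hcu s
    omega

lemma exists_borel_move {c u : Fin n →₀ ℕ} (hcu : ∀ s, psum c s ≤ psum u s)
    (hdeg : degE c = degE u) (hne : c ≠ u) :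
    ∃ j t : Fin n, j < t ∧ c t ≠ 0 ∧
      ∀ s, psum (c + Finsupp.single j 1 - Finsupp.single t 1) s ≤ psum u s := by
  obtain ⟨j₀, hj₀⟩ : ∃ j, c j ≠ u j := by
    by_contra! h
    exact hne (Finsupp.ext h)
  obtain ⟨j, hj, hjmin⟩ := wellFounded_lt.has_min {j | c j ≠ u j} ⟨j₀, hj₀⟩
  have hbelow : psum c j = psum u j := psum_congr fun i hi =>
    not_not.1 fun h => hjmin i h (Fin.lt_def.2 hi)
  have hcj : c j < u j := by
    have := hcu (j + 1)
    rw [psum_succ, psum_succ] at this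
    exact lt_of_le_of_ne (by omega) hj
  obtain ⟨t₀, ht₀⟩ : ∃ t, j < t ∧ c t ≠ 0 := by
    by_contra! h
    have hc : psum c (j + 1) = degE c := psum_eq_degE fun i hi => h i (Fin.lt_def.2 (by omega))
    have hu := psum_le_degE u (j + 1)
    rw [psum_succ] at hc hu
    omega
  obtain ⟨t, ⟨hjt, hct⟩, htmin⟩ := wellFounded_lt.has_min {t | j < t ∧ c t ≠ 0} ⟨t₀, ht₀⟩
  have hgap : ∀ s, (j : ℕ) < s → s ≤ t → psum c s = psum c (j + 1) := fun s h1 h2 =>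
    psum_eq_of_forall_eq_zero (by omega) fun i hi1 hi2 =>
      not_not.1 fun h => htmin i ⟨Fin.lt_def.2 (by omega), h⟩ (Fin.lt_def.2 (by omega))
  refine ⟨j, t, hjt, hct, fun s => ?_⟩
  have h := psum_add_single_tsub_single j hct s
  have := hcu s
  have := Fin.lt_def.1 hjt
  rcases le_or_gt s j with h1 | h1
  · rw [if_neg (by omega), if_neg (by omega)] at h
    omega
  rcases le_or_gt s t with h2 | h2
  · rw [if_neg (by omega), if_pos h1] at h
    have := hgap s h1 h2
    have := psum_mono u (show (j : ℕ) + 1 ≤ s by omega)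
    have := psum_succ c j
    have := psum_succ u j
    omega
  · rw [if_pos h2, if_pos h1] at h
    omega

/-- Induction on the gap between the partial-sum profiles of `c` and `u`: if `deg c < deg u`,
dividing `x^u` by its last variable keeps it above `x^c`; otherwise a Borel move on `x^c`
brings it closer to `x^u`. -/
theorem mem_of_forall_psum_le {I : Ideal (MvPolynomial (Fin n) k)} (hB : IsBorelFixed I)
    {c u : Fin n →₀ ℕ} (hc : (monomial c 1 : MvPolynomial (Fin n) k) ∈ I)
    (hcu : ∀ s, psum c s ≤ psum u s) : (monomial u 1 : MvPolynomial (Fin n) k) ∈ I := by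
  induction hD : ∑ s ∈ range (n + 1), psum u s - ∑ s ∈ range (n + 1), psum c s
    using Nat.strong_induction_on generalizing c u with
  | _ D ih =>
  rcases (show degE c ≤ degE u by rw [degE_eq_psum, degE_eq_psum]; exact hcu n).lt_or_eq
    with hdeg | hdeg
  · obtain ⟨q, hq, hcu'⟩ := exists_forall_psum_le_psum_tsub_single hcu hdeg
    have hle : ∀ s, psum (u - Finsupp.single q 1) s ≤ psum u s := fun s => by
      have := psum_tsub_single hq s
      omega
    have hlt := sum_psum_lt_sum_psum hle le_rfl (by
      have := psum_tsub_single hq n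
      rw [if_pos q.isLt] at this
      omega)
    have hmem := ih _ (by have := sum_psum_le_sum_psum hcu'; omega) hc hcu' rfl
    rw [← tsub_add_cancel_of_le (Finsupp.single_le_iff.2 (Nat.one_le_iff_ne_zero.2 hq)),
      ← mul_one (1 : k), ← monomial_mul]
    exact Ideal.mul_mem_right _ _ hmem
  · by_cases hcu_eq : c = u
    · exact hcu_eq ▸ hc
    obtain ⟨j, t, hjt, hct, hmove⟩ := exists_borel_move hcu hdeg hcu_eq
    have hmove_ge : ∀ s, psum c s ≤ psum (c + Finsupp.single j 1 - Finsupp.single t 1) s :=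
      fun s => by
        have h := psum_add_single_tsub_single j hct s
        have := Fin.lt_def.1 hjt
        split_ifs at h <;> omega
    have hlt := sum_psum_lt_sum_psum hmove_ge t.isLt.le (by
      have := psum_add_single_tsub_single j hct t
      rw [if_neg (lt_irrefl _), if_pos (Fin.lt_def.1 hjt)] at this
      omega)
    exact ih _ (by have := sum_psum_le_sum_psum hmove; omega) (hB c hc t j hjt hct) hmove rfl

end BorelFixed

section Boxes

open Finset

variable {n d : ℕ}

/-- `c` is the exponent vector of `x_1^{V_1} ⋯ x_{q-1}^{V_{q-1}} x_q^e` for some `q` and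
`e ≤ V_q`. -/
def IsPrefix (c V : Fin n →₀ ℕ) : Prop :=
  c ≤ V ∧ ∀ i j : Fin n, i < j → c j ≠ 0 → c i = V i

lemma isPrefix_refl (V : Fin n →₀ ℕ) : IsPrefix V V :=
  ⟨le_rfl, fun _ _ _ _ => rfl⟩

lemma IsPrefix.tsub_single {c V : Fin n →₀ ℕ} (h : IsPrefix c V) {q : Fin n}
    (hq : ∀ j, c j ≠ 0 → j ≤ q) : IsPrefix (c - Finsupp.single q 1) V := by
  refine ⟨tsub_le_self.trans h.1, fun i j hij hj => ?_⟩
  have hcj : c j ≠ 0 := fun h0 => hj (by simp [h0])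
  have hqi : q ≠ i := (hij.trans_le (hq j hcj)).ne'
  rw [Finsupp.tsub_apply, Finsupp.single_apply, if_neg hqi, tsub_zero]
  exact h.2 i j hij hcj

lemma boxExp_apply (a : Fin n →₀ ℕ) (j : Fin n) (t : Fin d) :
    boxExp d a (j, t) = if psum a j ≤ (t : ℕ) ∧ (t : ℕ) < psum a (j + 1) then 1 else 0 := by
  classical
  simp only [boxExp, Finsupp.finsetSum_apply, Finsupp.single_apply]
  rw [sum_ite_eq']
  simp

lemma exists_boxExp_eq_zero_and_ne_zero {c u : Fin n →₀ ℕ} (h : ∃ s, psum u s < psum c s) :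
    ∃ i : Fin n, c i ≠ 0 ∧ ∀ t : Fin d, (t : ℕ) = psum u (i + 1) →
      boxExp d u (i, t) = 0 ∧ boxExp d c (i, t) ≠ 0 := by
  obtain ⟨i, hci, hi⟩ := exists_psum_le_psum_succ_lt_psum_succ h
  have := psum_succ c i
  refine ⟨i, by omega, fun t ht => ⟨?_, ?_⟩⟩
  · rw [boxExp_apply, if_neg (by omega)]
  · rw [boxExp_apply, if_pos ⟨by omega, by omega⟩]
    exact one_ne_zero

lemma boxExp_le_of_isPrefix {c V : Fin n →₀ ℕ} (h : IsPrefix c V) : boxExp d c ≤ boxExp d V := by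
  rw [Finsupp.le_def]
  rintro ⟨j, t⟩
  rw [boxExp_apply, boxExp_apply]
  by_cases hc : psum c j ≤ (t : ℕ) ∧ (t : ℕ) < psum c (j + 1)
  · have := psum_succ c j
    have := psum_succ V j
    have hcj : c j ≠ 0 := by omega
    have := psum_congr (s := j) fun i hi => h.2 i j (Fin.lt_def.2 hi) hcj
    have := h.1 j
    rw [if_pos hc, if_pos ⟨by omega, by omega⟩]
  · rw [if_neg hc]
    exact Nat.zero_le _

/-- Raising the partial sums of `u` by one on `(i, r]`, where they are constant, extends the
`i`-th block of `B(x^u)` by the position `t` just past its end and only empties or shortens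
the blocks `i + 1, …, r`. -/
lemma boxExp_le_add_single {u V : Fin n →₀ ℕ} {i : Fin n} {r : ℕ} (hir : (i : ℕ) < r)
    (hgap : ∀ j : Fin n, i < j → (j : ℕ) < r → u j = 0)
    (hV : ∀ s ≤ n,
      psum V s + (if r < s then 1 else 0) = psum u s + (if (i : ℕ) < s then 1 else 0))
    {t : Fin d} (ht : (t : ℕ) = psum u (i + 1)) :
    boxExp d V ≤ boxExp d u + Finsupp.single (i, t) 1 := by
  have hflat : ∀ s, (i : ℕ) < s → s ≤ r → psum u s = psum u (i + 1) := fun s h1 h2 =>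
    psum_eq_of_forall_eq_zero (by omega) fun j hj1 hj2 =>
      hgap j (Fin.lt_def.2 (by omega)) (by omega)
  rw [Finsupp.le_def]
  rintro ⟨j, t'⟩
  rw [Finsupp.add_apply, boxExp_apply, boxExp_apply, Finsupp.single_apply]
  by_cases hp : (i, t) = (j, t')
  · rw [if_pos hp]
    split_ifs <;> omega
  have hp' : ¬((j : ℕ) = i ∧ (t' : ℕ) = t) := fun h =>
    hp (Prod.ext (Fin.ext h.1.symm) (Fin.ext h.2.symm))
  have h1 := hV j j.isLt.le
  have h2 := hV (j + 1) j.isLt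
  have f1 := hflat j
  have f2 := hflat (j + 1)
  have := psum_mono u (show (j : ℕ) ≤ j + 1 by omega)
  have := psum_mono u (show (i : ℕ) ≤ i + 1 by omega)
  rw [if_neg hp]
  split_ifs at h1 h2 ⊢ <;> omega

end Boxes

section MonomialIdeals

variable {σ R : Type*} [CommRing R]

lemma colon_span_monomial_eq_span_X {A : Set (σ →₀ ℕ)} {m : σ →₀ ℕ} {S : Set σ}
    (hS : ∀ v ∈ S, ∃ t ∈ A, t ≤ m + Finsupp.single v 1)
    (hA : ∀ t ∈ A, ∃ v ∈ S, m v = 0 ∧ t v ≠ 0) :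
    (Ideal.span ((fun t => monomial t (1 : R)) '' A)).colon
        (Ideal.span {monomial m (1 : R)} : Set (MvPolynomial σ R))
      = Ideal.span (X '' S) := by
  classical
  apply le_antisymm
  · intro p hp
    rw [Ideal.colon_span, Submodule.mem_colon_singleton, smul_eq_mul,
      mem_ideal_span_monomial_image] at hp
    rw [mem_ideal_span_X_image]
    intro e he
    obtain ⟨t, ht, hte⟩ := hp (e + m) <| by
      rw [mem_support_iff, coeff_mul_monomial, mul_one]
      exact mem_support_iff.1 he
    obtain ⟨v, hv, hmv, htv⟩ := hA t ht
    refine ⟨v, hv, fun hev => htv ?_⟩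
    have := hte v
    rw [Finsupp.add_apply, hev, hmv] at this
    omega
  · rw [Ideal.span_le]
    rintro _ ⟨v, hv, rfl⟩
    obtain ⟨t, ht, hle⟩ := hS v hv
    have hfactor : monomial (m + Finsupp.single v 1) (1 : R)
        = monomial (m + Finsupp.single v 1 - t) 1 * monomial t 1 := by
      rw [monomial_mul, mul_one, tsub_add_cancel_of_le hle]
    rw [SetLike.mem_coe, Ideal.colon_span, Submodule.mem_colon_singleton, smul_eq_mul, X,
      monomial_mul, one_mul, add_comm, hfactor]
    exact Ideal.mul_mem_left _ _ (Ideal.subset_span ⟨t, ht, rfl⟩)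

lemma isPrime_span_X_image [IsDomain R] (S : Set σ) :
    (Ideal.span (X '' S : Set (MvPolynomial σ R))).IsPrime := by
  classical
  set P := Ideal.span (X '' S : Set (MvPolynomial σ R))
  -- killing the variables of `S` is the identity modulo `P` and has kernel `P`
  let f : MvPolynomial σ R →ₐ[R] MvPolynomial σ R := aeval fun s => if s ∈ S then 0 else X s
  have hf : (Ideal.Quotient.mkₐ R P).comp f = Ideal.Quotient.mkₐ R P := by
    refine algHom_ext fun s => ?_
    by_cases hs : s ∈ S
    · have hXs : X s ∈ P := Ideal.subset_span ⟨s, hs, rfl⟩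
      simpa [f, hs] using (Ideal.Quotient.eq_zero_iff_mem.2 hXs).symm
    · simp [f, hs]
  have hker : RingHom.ker f = P := by
    apply le_antisymm
    · intro p hp
      rw [← Ideal.Quotient.eq_zero_iff_mem, ← Ideal.Quotient.mkₐ_eq_mk R, ← hf,
        AlgHom.comp_apply, RingHom.mem_ker.1 hp, map_zero]
    · rw [Ideal.span_le]
      rintro _ ⟨s, hs, rfl⟩
      simp [f, hs]
  exact hker ▸ RingHom.ker_isPrime f

lemma setOf_exists_eq_X_eq_image_X {n d : ℕ} (P : Fin n → Prop) (f : Fin n → ℕ) :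
    {q : MvPolynomial (Fin n × Fin d) R | ∃ i, P i ∧ ∃ h : f i < d, q = X (i, ⟨f i, h⟩)}
      = X '' {p | P p.1 ∧ (p.2 : ℕ) = f p.1} := by
  ext q
  constructor
  · rintro ⟨i, hi, h, rfl⟩
    exact ⟨(i, ⟨_, h⟩), ⟨hi, rfl⟩, rfl⟩
  · rintro ⟨⟨i, t⟩, ⟨hi, ht⟩, rfl⟩
    exact ⟨i, hi, ht ▸ t.isLt, congrArg (fun t => X (i, t)) (Fin.ext ht)⟩

end MonomialIdeals

section MinimalGenerators

variable {n : ℕ} {k : Type} [CommRing k]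

lemma boxIdeal_eq_span (d : ℕ) (I : Ideal (MvPolynomial (Fin n) k)) :
    boxIdeal d I
      = Ideal.span ((fun t => monomial t (1 : k)) '' (boxExp d '' {c | IsMinGen I c})) := by
  rw [boxIdeal, Set.image_image]
  exact congrArg Ideal.span <|
    Set.ext fun _ => ⟨fun ⟨c, hc, h⟩ => ⟨c, hc, h.symm⟩, fun ⟨c, hc, h⟩ => ⟨c, hc, h.symm⟩⟩

/-- A minimal prefix of `x^V` in a Borel fixed ideal is a minimal generator: dropping any
variable can be traded, by a Borel move, for dropping the last one. -/
lemma exists_isMinGen_isPrefix {I : Ideal (MvPolynomial (Fin n) k)} (hB : IsBorelFixed I)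
    {V : Fin n →₀ ℕ} (hV : (monomial V 1 : MvPolynomial (Fin n) k) ∈ I) :
    ∃ c, IsMinGen I c ∧ IsPrefix c V := by
  obtain ⟨c, ⟨hcV, hcI⟩, hmin⟩ := wellFounded_lt.has_min
    {c | IsPrefix c V ∧ (monomial c 1 : MvPolynomial (Fin n) k) ∈ I} ⟨V, isPrefix_refl V, hV⟩
  refine ⟨c, ⟨hcI, fun v hv hmem => ?_⟩, hcV⟩
  have hsupp : c.support.Nonempty := ⟨v, Finsupp.mem_support_iff.2 hv⟩
  set q := c.support.max' hsupp
  have hq : c q ≠ 0 := Finsupp.mem_support_iff.1 (Finset.max'_mem _ _)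
  have hle : ∀ j, c j ≠ 0 → j ≤ q := fun j hj =>
    Finset.le_max' _ j (Finsupp.mem_support_iff.2 hj)
  have hqI : (monomial (c - Finsupp.single q 1) 1 : MvPolynomial (Fin n) k) ∈ I := by
    rcases (hle v hv).lt_or_eq with hvq | hvq
    · have := hB _ hmem q v hvq <| by
        rwa [Finsupp.tsub_apply, Finsupp.single_apply, if_neg hvq.ne, tsub_zero]
      rwa [tsub_add_cancel_of_le (Finsupp.single_le_iff.2 (Nat.one_le_iff_ne_zero.2 hv))] at this
    · exact hvq ▸ hmem
  refine hmin _ ⟨hcV.tsub_single hle, hqI⟩ (Finsupp.lt_def.2 ⟨tsub_le_self, q, ?_⟩)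
  rw [Finsupp.tsub_apply, Finsupp.single_eq_same]
  omega

end MinimalGenerators

section LexLargestGenerator

lemma not_lexLT_add_single_tsub_single {n : ℕ} (a : Fin n →₀ ℕ) {i ρ : Fin n} (hiρ : i < ρ) :
    ¬lexLT (a + Finsupp.single i 1 - Finsupp.single ρ 1) a := by
  rintro ⟨m, hm, hm'⟩
  have hy : ∀ j, (a + Finsupp.single i 1 - Finsupp.single ρ 1 : Fin n →₀ ℕ) j
      = a j + (if i = j then 1 else 0) - (if ρ = j then 1 else 0) := fun j => by
    simp [Finsupp.single_apply]
  have hyi := hy i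
  rw [if_pos rfl, if_neg hiρ.ne'] at hyi
  rcases lt_trichotomy m i with hmi | rfl | hmi
  · have := hy m
    rw [if_neg hmi.ne', if_neg (hmi.trans hiρ).ne'] at this
    omega
  · omega
  · have := hm' i hmi
    omega

variable {n d : ℕ} {k : Type} [CommRing k] {I : Ideal (MvPolynomial (Fin n) k)}
  {a u : Fin n →₀ ℕ} {l : Fin n}

/-- The minimal generator below `x^V x_l = x^a x_i / x_ρ`, where `x^V = x^u x_i / x_ρ`, is a
proper divisor by lex-maximality of `x^a`, and is therefore dominated by `x^V`. -/
lemma mem_add_single_tsub_single (hB : IsBorelFixed I) (ha : IsMinGen I a)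
    (hu : u + Finsupp.single l 1 = a) (hsupp : ∀ j, l < j → a j = 0)
    (hmax : ∀ c, IsMinGen I c → c l ≠ 0 → c ≠ a → lexLT c a)
    {i ρ : Fin n} (hiρ : i < ρ) (hρ : u ρ ≠ 0) :
    (monomial (u + Finsupp.single i 1 - Finsupp.single ρ 1) 1 : MvPolynomial (Fin n) k) ∈ I := by
  set V := u + Finsupp.single i 1 - Finsupp.single ρ 1
  have hVρ : V + Finsupp.single ρ 1 = u + Finsupp.single i 1 :=
    tsub_add_cancel_of_le (Finsupp.single_le_iff.2 (by rw [Finsupp.add_apply]; omega))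
  have hy : V + Finsupp.single l 1 = a + Finsupp.single i 1 - Finsupp.single ρ 1 := by
    rw [← hu, add_right_comm u, ← hVρ, add_right_comm, add_tsub_cancel_right]
  have hyj : ∀ j, (V + Finsupp.single l 1 : Fin n →₀ ℕ) j
      = a j + (if i = j then 1 else 0) - (if ρ = j then 1 else 0) := fun j => by
    simp [hy, Finsupp.single_apply]
  have hyI : (monomial (V + Finsupp.single l 1) 1 : MvPolynomial (Fin n) k) ∈ I :=
    hy ▸ hB a ha.1 ρ i hiρ (by rw [← hu, Finsupp.add_apply]; omega)
  have hρl : ρ ≤ l := not_lt.1 fun h => by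
    have := hsupp ρ h
    rw [← hu, Finsupp.add_apply] at this
    omega
  have hVsupp : ∀ j, l < j → V j = 0 := fun j hj => by
    have := hyj j
    rw [hsupp j hj, if_neg ((hiρ.trans_le hρl).trans hj).ne, Finsupp.add_apply] at this
    omega
  obtain ⟨g, hg, hgy⟩ := exists_isMinGen_isPrefix hB hyI
  refine mem_of_forall_psum_le hB hg.1 (psum_le_of_lt_add_single (lt_of_le_of_ne hgy.1 ?_) hVsupp)
  rintro rfl
  have hya : V + Finsupp.single l 1 ≠ a := fun h => by
    have := hyj i
    rw [h, if_pos rfl, if_neg hiρ.ne'] at this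
    omega
  exact not_lexLT_add_single_tsub_single a hiρ (hy ▸ hmax _ hg (by simp) hya)

lemma exists_isMinGen_boxExp_le_add_single (hB : IsBorelFixed I) (ha : IsMinGen I a)
    (hu : u + Finsupp.single l 1 = a) (hsupp : ∀ j, l < j → a j = 0)
    (hmax : ∀ c, IsMinGen I c → c l ≠ 0 → c ≠ a → lexLT c a)
    {i : Fin n} (hil : i ≤ l) {t : Fin d} (ht : (t : ℕ) = psum u (i + 1)) :
    ∃ c, IsMinGen I c ∧ boxExp d c ≤ boxExp d u + Finsupp.single (i, t) 1 := by
  suffices ∃ V, (monomial V 1 : MvPolynomial (Fin n) k) ∈ I ∧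
      boxExp d V ≤ boxExp d u + Finsupp.single (i, t) 1 by
    obtain ⟨V, hV, hVle⟩ := this
    obtain ⟨c, hc, hcV⟩ := exists_isMinGen_isPrefix hB hV
    exact ⟨c, hc, (boxExp_le_of_isPrefix hcV).trans hVle⟩
  by_cases hρ : ∃ ρ, i < ρ ∧ u ρ ≠ 0
  · obtain ⟨ρ, ⟨hiρ, hρ⟩, hρmin⟩ := wellFounded_lt.has_min {ρ | i < ρ ∧ u ρ ≠ 0} hρ
    refine ⟨_, mem_add_single_tsub_single hB ha hu hsupp hmax hiρ hρ,
      boxExp_le_add_single (Fin.lt_def.1 hiρ)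
        (fun j hij hjρ => not_not.1 fun h => hρmin j ⟨hij, h⟩ (Fin.lt_def.2 hjρ))
        (fun s _ => ?_) ht⟩
    rw [← psum_single ρ 1 s, ← psum_add, ← psum_single i 1 s, ← psum_add,
      tsub_add_cancel_of_le (Finsupp.single_le_iff.2 (by rw [Finsupp.add_apply]; omega))]
  · replace hρ : ∀ ρ, i < ρ → u ρ = 0 := fun ρ h => not_not.1 fun h' => hρ ⟨ρ, h, h'⟩
    have hV : (monomial (u + Finsupp.single i 1) 1 : MvPolynomial (Fin n) k) ∈ I := by
      rcases hil.lt_or_eq with hil | rfl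
      · have := hB a ha.1 l i hil (by rw [← hu, Finsupp.add_apply]; simp)
        rwa [← hu, add_right_comm, add_tsub_cancel_right] at this
      · exact hu ▸ ha.1
    refine ⟨_, hV, boxExp_le_add_single (r := n) i.isLt (fun j hj _ => hρ j hj)
      (fun s hs => ?_) ht⟩
    rw [psum_add, psum_single, if_neg (show ¬n < s by omega), add_zero]

end LexLargestGenerator

theorem colon_boxIdeal_eq_prime_general (n d : ℕ) (k : Type) [Field k]
    (I : Ideal (MvPolynomial (Fin n) k)) (hB : IsBorelFixed I)
    (hd : ∀ a : Fin n →₀ ℕ, IsMinGen I a → degE a ≤ d)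
    (a : Fin n →₀ ℕ) (il : Fin n) (ha : IsMinGen I a) (hail : a il ≠ 0)
    (hnuI : ∀ c : Fin n →₀ ℕ, IsMinGen I c → ∀ j ∈ c.support, j ≤ il)
    (hmax : ∀ c : Fin n →₀ ℕ, IsMinGen I c → c il ≠ 0 → c ≠ a → lexLT c a) :
    (boxIdeal d I).colon (Ideal.span {(monomial (boxExp d (a - Finsupp.single il 1)) 1 :
        MvPolynomial (Fin n × Fin d) k)})
      = Ideal.span {q : MvPolynomial (Fin n × Fin d) k | ∃ i : Fin n, i ≤ il ∧
          ∃ h : psum (a - Finsupp.single il 1) ((i : ℕ) + 1) < d,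
          q = X (i, (⟨psum (a - Finsupp.single il 1) ((i : ℕ) + 1), h⟩ : Fin d))}
      ∧ (Ideal.span {q : MvPolynomial (Fin n × Fin d) k | ∃ i : Fin n, i ≤ il ∧
          ∃ h : psum (a - Finsupp.single il 1) ((i : ℕ) + 1) < d,
          q = X (i, (⟨psum (a - Finsupp.single il 1) ((i : ℕ) + 1), h⟩ : Fin d))}).IsPrime := by
  set u := a - Finsupp.single il 1
  have hu : u + Finsupp.single il 1 = a :=
    tsub_add_cancel_of_le (Finsupp.single_le_iff.2 (Nat.one_le_iff_ne_zero.2 hail))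
  have hsupp : ∀ j, il < j → a j = 0 := fun j hj =>
    not_not.1 fun h => (hnuI a ha j (Finsupp.mem_support_iff.2 h)).not_gt hj
  have hb : ∀ i : Fin n, psum u (i + 1) < d := fun i => by
    have := psum_le_degE u (i + 1)
    have := hu ▸ hd a ha
    rw [degE_add_single] at this
    omega
  rw [setOf_exists_eq_X_eq_image_X (· ≤ il) fun i : Fin n => psum u (i + 1), boxIdeal_eq_span]
  refine ⟨colon_span_monomial_eq_span_X ?_ ?_, isPrime_span_X_image _⟩
  · rintro ⟨i, t⟩ ⟨hi, ht⟩
    obtain ⟨c, hc, hle⟩ := exists_isMinGen_boxExp_le_add_single hB ha hu hsupp hmax hi ht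
    exact ⟨_, ⟨c, hc, rfl⟩, hle⟩
  · rintro _ ⟨c, hc, rfl⟩
    obtain ⟨i, hci, hbox⟩ := exists_boxExp_eq_zero_and_ne_zero (d := d) (c := c) (u := u) <| by
      by_contra! h
      exact ha.2 il hail (mem_of_forall_psum_le hB hc.1 h)
    exact ⟨(i, ⟨_, hb i⟩), ⟨hnuI c hc i (Finsupp.mem_support_iff.2 hci), rfl⟩, hbox _ rfl⟩

/-- Claim 2: with `n̂ = B(m_1)`, `m_1 = m/x_l = ∏ x_i^{a_i}` and partial
sums `b_i`, the colon ideal `B(I) : n̂` equals the prime ideal `(x_{i, b_i+1} ∣ i ≤ l)`. -/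
theorem colon_boxIdeal_eq_prime (n d : ℕ) (k : Type) [Field k]
    (I : Ideal (MvPolynomial (Fin n) k)) (hmon : IsMonomialIdeal I) (hB : IsBorelFixed I)
    (hnp : ¬ I.IsPrime) (hd : ∀ a : Fin n →₀ ℕ, IsMinGen I a → degE a ≤ d)
    (a : Fin n →₀ ℕ) (il : Fin n) (ha : IsMinGen I a) (hail : a il ≠ 0)
    (hasupp : ∀ j ∈ a.support, j ≤ il)
    (hnuI : ∀ c : Fin n →₀ ℕ, IsMinGen I c → ∀ j ∈ c.support, j ≤ il)
    (hmax : ∀ c : Fin n →₀ ℕ, IsMinGen I c → c il ≠ 0 → c ≠ a → lexLT c a)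
    (hne : a ≠ Finsupp.single il 1) :
    (boxIdeal d I).colon (Ideal.span {(monomial (boxExp d (a - Finsupp.single il 1)) 1 :
        MvPolynomial (Fin n × Fin d) k)})
      = Ideal.span {q : MvPolynomial (Fin n × Fin d) k | ∃ i : Fin n, i ≤ il ∧
          ∃ h : psum (a - Finsupp.single il 1) ((i : ℕ) + 1) < d,
          q = X (i, (⟨psum (a - Finsupp.single il 1) ((i : ℕ) + 1), h⟩ : Fin d))}
      ∧ (Ideal.span {q : MvPolynomial (Fin n × Fin d) k | ∃ i : Fin n, i ≤ il ∧
          ∃ h : psum (a - Finsupp.single il 1) ((i : ℕ) + 1) < d,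
          q = X (i, (⟨psum (a - Finsupp.single il 1) ((i : ℕ) + 1), h⟩ : Fin d))}).IsPrime :=
  colon_boxIdeal_eq_prime_general n d k I hB hd a il ha hail hnuI hmax

end Pol
end
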